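/- arXiv:1001.2245 — 3 statements merged into one kernel-verified Lean document; each statement's English description precedes it below -/
import Mathlib

section
/- Let g : [t₀,∞) → ℝ be C¹ with g ≥ 1, and n : [t₀,∞) → ℝ continuous with 0 ≤ n(t) ≤ α₁(α₂ + g(t)) for constants α₁ > 0, α₂ ∈ ℝ with α₂ + g ≥ 0. Define, for λ, ω > 0, s(t) := (n(t)g(t)/λ) E(t) + (ω/2)∫_{t₀}^t n(τ) E(τ) dτ with E(t) := e^{−(ωλ/2)∫_{t₀}^t dτ/g(τ)}. Then s(t) ≤ (α₁/λ)(α₂ + g(t₀)) g(t₀) + (α₁/λ)∫_{t₀}^t E(τ) g'(τ)(α₂ + 2g(τ)) dτ. -/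
/-!
With `c = ωλ/2`, the weight `E` solves `E' = -c E / g`, so the energy `F = (α₂ + g) g E` satisfies
`F' = E g' (α₂ + 2g) - c (α₂ + g) E`. Bounding `n` by `α₁ (α₂ + g)` gives
`s(t) ≤ (α₁/λ) (F(t) + c ∫ (α₂ + g) E)`, and by the fundamental theorem of calculus the bracket
equals `F(t₀) + ∫ E g' (α₂ + 2g)` with `F(t₀) = (α₂ + g(t₀)) g(t₀)` since `E(t₀) = 1`.
-/

open Set Real MeasureTheory

theorem hasDerivAt_exp_const_mul_integral {f : ℝ → ℝ} {a x k : ℝ}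
    (hf : IntervalIntegrable f volume a x) (hmeas : StronglyMeasurableAtFilter f (nhds x))
    (hcont : ContinuousAt f x) :
    HasDerivAt (fun s => exp (k * ∫ τ in a..s, f τ))
      (exp (k * ∫ τ in a..x, f τ) * (k * f x)) x :=
  ((intervalIntegral.integral_hasDerivAt_right hf hmeas hcont).const_mul k).exp

theorem hasDerivAt_of_eq_exp_integral_inv {g E : ℝ → ℝ} {t₀ c x : ℝ} (hg : Continuous g)
    (hg0 : ∀ τ ∈ uIcc t₀ x, g τ ≠ 0)
    (hE : ∀ s, E s = exp (-c * ∫ τ in t₀..s, 1 / g τ)) :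
    HasDerivAt E (-c * E x / g x) x := by
  have hinv : ContinuousOn (fun τ => 1 / g τ) (uIcc t₀ x) :=
    continuousOn_const.div hg.continuousOn hg0
  have hderiv := hasDerivAt_exp_const_mul_integral (k := -c) hinv.intervalIntegrable
    (measurable_const.div hg.measurable).stronglyMeasurable.stronglyMeasurableAtFilter
    (continuousAt_const.div hg.continuousAt (hg0 x right_mem_uIcc))
  rw [hE x, funext hE]
  convert hderiv using 1
  ring

/-- Integrated form of `((α + g) g E)' = E g' (α + 2g) - c (α + g) E` when `E' = -c E / g`. -/
theorem energy_add_integral_eq {g E : ℝ → ℝ} {α c a b : ℝ} (hab : a ≤ b) (hg : ContDiff ℝ 1 g)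
    (hg0 : ∀ x ∈ Icc a b, g x ≠ 0) (hE : ∀ x ∈ Icc a b, HasDerivAt E (-c * E x / g x) x) :
    (α + g b) * g b * E b + c * ∫ x in a..b, (α + g x) * E x =
      (α + g a) * g a * E a + ∫ x in a..b, E x * deriv g x * (α + 2 * g x) := by
  have hEcont : ContinuousOn E (Icc a b) := HasDerivAt.continuousOn hE
  have hgc : Continuous g := hg.continuous
  have hint₁ : IntervalIntegrable (fun x => E x * deriv g x * (α + 2 * g x)) volume a b :=
    ((hEcont.mul (hg.continuous_deriv le_rfl).continuousOn).mul
      (continuousOn_const.add (continuousOn_const.mul hgc.continuousOn))).intervalIntegrable_of_Icc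
        hab
  have hint₂ : IntervalIntegrable (fun x => c * ((α + g x) * E x)) volume a b :=
    (continuousOn_const.mul
      ((continuousOn_const.add hgc.continuousOn).mul hEcont)).intervalIntegrable_of_Icc hab
  have hF : ∀ x ∈ uIcc a b, HasDerivAt (fun s => (α + g s) * g s * E s)
      (E x * deriv g x * (α + 2 * g x) - c * ((α + g x) * E x)) x := by
    intro x hx
    rw [uIcc_of_le hab] at hx
    have hgd : HasDerivAt g (deriv g x) x := (hg.differentiable one_ne_zero x).hasDerivAt
    refine (((hgd.const_add α).mul hgd).mul (hE x hx)).congr_deriv ?_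
    simp only [Pi.mul_apply]
    field_simp [hg0 x hx]
    ring
  have hFTC := intervalIntegral.integral_eq_sub_of_hasDerivAt hF (hint₁.sub hint₂)
  rw [intervalIntegral.integral_sub hint₁ hint₂, intervalIntegral.integral_const_mul] at hFTC
  linarith

theorem integral_mul_le_integral_mul_of_le {f h w : ℝ → ℝ} {a b : ℝ} (hab : a ≤ b)
    (hf : ContinuousOn f (Icc a b)) (hh : ContinuousOn h (Icc a b)) (hw : ContinuousOn w (Icc a b))
    (hfh : ∀ x ∈ Icc a b, f x ≤ h x) (hw0 : ∀ x ∈ Icc a b, 0 ≤ w x) :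
    ∫ x in a..b, f x * w x ≤ ∫ x in a..b, h x * w x :=
  intervalIntegral.integral_mono_on hab ((hf.mul hw).intervalIntegrable_of_Icc hab)
    ((hh.mul hw).intervalIntegrable_of_Icc hab) fun x hx =>
      mul_le_mul_of_nonneg_right (hfh x hx) (hw0 x hx)

theorem s_upper_bound_general (t₀ lam ω α₁ α₂ : ℝ) (g n E : ℝ → ℝ)
    (hlam : 0 < lam) (hω : 0 < ω)
    (hg : ContDiff ℝ 1 g) (hg1 : ∀ t : ℝ, t₀ ≤ t → 1 ≤ g t)
    (hn : Continuous n)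
    (hnbound : ∀ t : ℝ, t₀ ≤ t → n t ≤ α₁ * (α₂ + g t))
    (hE : ∀ t : ℝ, E t = Real.exp (-(ω * lam / 2) * ∫ τ in t₀..t, 1 / g τ)) :
    ∀ t : ℝ, t₀ ≤ t →
      n t * g t / lam * E t + (ω / 2) * (∫ τ in t₀..t, n τ * E τ) ≤
      α₁ / lam * (α₂ + g t₀) * g t₀ +
      α₁ / lam * ∫ τ in t₀..t, E τ * deriv g τ * (α₂ + 2 * g τ) := by
  intro t ht
  have hgpos : ∀ x, t₀ ≤ x → 0 < g x := fun x hx => one_pos.trans_le (hg1 x hx)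
  have hEpos : ∀ x, 0 < E x := fun x => (hE x).symm ▸ exp_pos _
  have hE0 : E t₀ = 1 := by rw [hE, intervalIntegral.integral_same, mul_zero, exp_zero]
  have hE' : ∀ x ∈ Icc t₀ t, HasDerivAt E (-(ω * lam / 2) * E x / g x) x := fun x hx =>
    hasDerivAt_of_eq_exp_integral_inv hg.continuous
      (fun τ hτ => (hgpos τ (uIcc_of_le hx.1 ▸ hτ).1).ne') hE
  have henergy := energy_add_integral_eq (α := α₂) ht hg (fun x hx => (hgpos x hx.1).ne') hE'
  have hpoint : n t * g t / lam * E t ≤ α₁ / lam * ((α₂ + g t) * g t * E t) := by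
    have hgE : 0 ≤ g t * E t / lam := by positivity [hgpos t ht, hEpos t]
    linear_combination mul_le_mul_of_nonneg_right (hnbound t ht) hgE
  have hintegral : ∫ x in t₀..t, n x * E x ≤ α₁ * ∫ x in t₀..t, (α₂ + g x) * E x := by
    simp_rw [← intervalIntegral.integral_const_mul, ← mul_assoc]
    exact integral_mul_le_integral_mul_of_le ht hn.continuousOn
      (continuous_const.mul (continuous_const.add hg.continuous)).continuousOn
      (HasDerivAt.continuousOn hE') (fun x hx => hnbound x hx.1) (fun x _ => (hEpos x).le)
  calc n t * g t / lam * E t + ω / 2 * ∫ x in t₀..t, n x * E x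
      ≤ α₁ / lam * ((α₂ + g t) * g t * E t) + ω / 2 * (α₁ * ∫ x in t₀..t, (α₂ + g x) * E x) :=
        add_le_add hpoint (mul_le_mul_of_nonneg_left hintegral (by positivity))
    _ = α₁ / lam * ((α₂ + g t) * g t * E t +
          ω * lam / 2 * ∫ x in t₀..t, (α₂ + g x) * E x) := by
        field_simp
    _ = _ := by rw [henergy, hE0]; ring

/-- Upper bound for s(t) via integration by parts. -/
theorem s_upper_bound (t₀ lam ω α₁ α₂ : ℝ) (g n E : ℝ → ℝ)
    (hlam : 0 < lam) (hω : 0 < ω) (hα₁ : 0 < α₁)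
    (hg : ContDiff ℝ 1 g) (hg1 : ∀ t : ℝ, t₀ ≤ t → 1 ≤ g t)
    (hα₂g : ∀ t : ℝ, t₀ ≤ t → 0 ≤ α₂ + g t)
    (hn : Continuous n) (hn0 : ∀ t : ℝ, t₀ ≤ t → 0 ≤ n t)
    (hnbound : ∀ t : ℝ, t₀ ≤ t → n t ≤ α₁ * (α₂ + g t))
    (hE : ∀ t : ℝ, E t = Real.exp (-(ω * lam / 2) * ∫ τ in t₀..t, 1 / g τ)) :
    ∀ t : ℝ, t₀ ≤ t →
      n t * g t / lam * E t + (ω / 2) * (∫ τ in t₀..t, n τ * E τ) ≤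
      α₁ / lam * (α₂ + g t₀) * g t₀ +
      α₁ / lam * ∫ τ in t₀..t, E τ * deriv g τ * (α₂ + 2 * g τ) :=
  s_upper_bound_general t₀ lam ω α₁ α₂ g n E hlam hω hg hg1 hn hnbound hE
end

section
/- Let g : [t₀,∞) → ℝ be continuous with 1 ≤ g(t) ≤ Ḡ := sup g < ∞, n continuous with 0 ≤ n(t) ≤ α₁(α₂ + g(t)) where α₁ > 0 and α₂ + 1 ≥ 0, and λ, ω > 0. Define s(t) := (n(t)g(t)/λ) e^{−(ωλ/2)∫_{t₀}^t dτ/g(τ)} + (ω/2)∫_{t₀}^t n(τ) e^{−(ωλ/2)∫_{t₀}^τ dτ'/g(τ')} dτ. Then sup_{t ≥ t₀} s(t) ≤ (α₁/λ)(α₂ + Ḡ) Ḡ. -/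
/-!
Write `E(τ) = exp(-c ∫_{t₀}^τ 1/g)` with `c = ωλ/2`. Since `E' = -(c/g) E`, the integral of
`(c/g) E` over `[t₀, t]` is `1 - E(t)`. As `g ≤ Ḡ` and `n ≤ M := α₁(α₂ + Ḡ)`, the integrand
`n E` is at most `(MḠ/c) · (c/g) E`, so the integral term of `s(t)` is at most
`(MḠ/λ)(1 - E(t))`, while the first term is at most `(MḠ/λ) E(t)`. The two add up to `MḠ/λ`.
-/

open Real Set intervalIntegral

theorem continuousOn_primitive_Icc {f : ℝ → ℝ} {a b : ℝ} (hab : a ≤ b)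
    (hf : ContinuousOn f (Icc a b)) : ContinuousOn (fun u => ∫ s in a..u, f s) (Icc a b) := by
  have hfi : MeasureTheory.IntegrableOn f (uIcc a b) := by
    simpa only [uIcc_of_le hab] using hf.integrableOn_Icc
  simpa only [uIcc_of_le hab] using continuousOn_primitive_interval hfi

theorem integral_mul_exp_neg_mul_primitive {f : ℝ → ℝ} {a b : ℝ} (c : ℝ) (hab : a ≤ b)
    (hf : ContinuousOn f (Icc a b)) :
    ∫ τ in a..b, c * f τ * exp (-c * ∫ s in a..τ, f s) =
      1 - exp (-c * ∫ s in a..b, f s) := by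
  set F : ℝ → ℝ := fun u => ∫ s in a..u, f s
  have hF := continuousOn_primitive_Icc hab hf
  have hF' : ∀ x ∈ Ioo a b, HasDerivAt F (f x) x := fun x hx =>
    integral_hasDerivAt_right
      ((hf.mono (Icc_subset_Icc_right hx.2.le)).intervalIntegrable_of_Icc hx.1.le)
      ((hf.mono Ioo_subset_Icc_self).stronglyMeasurableAtFilter isOpen_Ioo x hx)
      (hf.continuousAt (Icc_mem_nhds hx.1 hx.2))
  have hFTC := integral_eq_sub_of_hasDerivAt_of_le hab
    (f := fun u => -exp (-c * F u)) (f' := fun τ => c * f τ * exp (-c * F τ)) (by fun_prop)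
    (fun x hx => (((hF' x hx).const_mul (-c)).exp.neg).congr_deriv (by ring))
    (ContinuousOn.intervalIntegrable_of_Icc hab (by fun_prop))
  rw [hFTC]
  simp only [F, integral_same, mul_zero, exp_zero]
  ring

theorem integral_mul_exp_neg_mul_primitive_le {f h : ℝ → ℝ} {a b c G M : ℝ} (hab : a ≤ b)
    (hc : 0 < c) (hM : 0 ≤ M) (hf : ContinuousOn f (Icc a b)) (hh : ContinuousOn h (Icc a b))
    (hfG : ∀ τ ∈ Icc a b, 1 ≤ G * f τ) (hhM : ∀ τ ∈ Icc a b, h τ ≤ M) :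
    ∫ τ in a..b, h τ * exp (-c * ∫ s in a..τ, f s) ≤
      M * G / c * (1 - exp (-c * ∫ s in a..b, f s)) := by
  have hF := continuousOn_primitive_Icc hab hf
  rw [← integral_mul_exp_neg_mul_primitive c hab hf, ← integral_const_mul]
  refine integral_mono_on hab (ContinuousOn.intervalIntegrable_of_Icc hab (by fun_prop))
    (ContinuousOn.intervalIntegrable_of_Icc hab (by fun_prop)) fun τ hτ => ?_
  have hE := exp_pos (-c * ∫ s in a..τ, f s)
  calc h τ * exp (-c * ∫ s in a..τ, f s)
      ≤ M * (G * f τ) * exp (-c * ∫ s in a..τ, f s) := by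
        gcongr
        exact (hhM τ hτ).trans (le_mul_of_one_le_right hM (hfG τ hτ))
    _ = M * G / c * (c * f τ * exp (-c * ∫ s in a..τ, f s)) := by
        field_simp

theorem s_uniform_bound_general (t₀ lam ω α₁ α₂ Gbar : ℝ) (g n : ℝ → ℝ)
    (hlam : 0 < lam) (hω : 0 < ω) (hα₁ : 0 < α₁)
    (hg : Continuous g) (hg1 : ∀ t : ℝ, t₀ ≤ t → 1 ≤ g t)
    (hGbar : IsLUB (g '' Set.Ici t₀) Gbar)
    (hn : Continuous n) (hn0 : ∀ t : ℝ, t₀ ≤ t → 0 ≤ n t)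
    (hnbound : ∀ t : ℝ, t₀ ≤ t → n t ≤ α₁ * (α₂ + g t)) :
    ∀ t : ℝ, t₀ ≤ t →
      n t * g t / lam * Real.exp (-(ω * lam / 2) * ∫ τ in t₀..t, 1 / g τ) +
      (ω / 2) * (∫ τ in t₀..t,
        n τ * Real.exp (-(ω * lam / 2) * ∫ τ' in t₀..τ, 1 / g τ')) ≤
      α₁ / lam * (α₂ + Gbar) * Gbar := by
  intro t ht
  have hgpos (τ : ℝ) (hτ : t₀ ≤ τ) : 0 < g τ := one_pos.trans_le (hg1 τ hτ)
  have hgG (τ : ℝ) (hτ : t₀ ≤ τ) : g τ ≤ Gbar := hGbar.1 ⟨τ, hτ, rfl⟩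
  have hnM (τ : ℝ) (hτ : t₀ ≤ τ) : n τ ≤ α₁ * (α₂ + Gbar) :=
    (hnbound τ hτ).trans (mul_le_mul_of_nonneg_left (by linarith [hgG τ hτ]) hα₁.le)
  have hinvg : ContinuousOn (fun τ => 1 / g τ) (Icc t₀ t) :=
    continuousOn_const.div hg.continuousOn fun τ hτ => (hgpos τ hτ.1).ne'
  have hG_invg (τ : ℝ) (hτ : τ ∈ Icc t₀ t) : 1 ≤ Gbar * (1 / g τ) := by
    rw [mul_one_div, one_le_div (hgpos τ hτ.1)]
    exact hgG τ hτ.1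
  set M := α₁ * (α₂ + Gbar)
  have hM0 : 0 ≤ M := (hn0 t ht).trans (hnM t ht)
  set E := Real.exp (-(ω * lam / 2) * ∫ τ in t₀..t, 1 / g τ)
  have hfirst : n t * g t / lam * E ≤ M * Gbar / lam * E := by
    gcongr
    exacts [(hgpos t ht).le, hnM t ht, hgG t ht]
  have hsecond : ω / 2 * ∫ τ in t₀..t, n τ * Real.exp (-(ω * lam / 2) * ∫ τ' in t₀..τ, 1 / g τ')
      ≤ M * Gbar / lam * (1 - E) := by
    calc _ ≤ ω / 2 * (M * Gbar / (ω * lam / 2) * (1 - E)) := by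
          gcongr
          exact integral_mul_exp_neg_mul_primitive_le ht (by positivity) hM0 hinvg
            hn.continuousOn hG_invg fun τ hτ => hnM τ hτ.1
      _ = M * Gbar / lam * (1 - E) := by field_simp
  calc _ ≤ M * Gbar / lam * E + M * Gbar / lam * (1 - E) := add_le_add hfirst hsecond
    _ = α₁ / lam * (α₂ + Gbar) * Gbar := by ring

/-- If g is bounded above by its finite supremum Ḡ, then s is uniformly bounded by
(α₁/λ)(α₂+Ḡ)Ḡ. -/
theorem s_uniform_bound (t₀ lam ω α₁ α₂ Gbar : ℝ) (g n : ℝ → ℝ)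
    (hlam : 0 < lam) (hω : 0 < ω) (hα₁ : 0 < α₁) (hα₂ : 0 ≤ α₂ + 1)
    (hg : Continuous g) (hg1 : ∀ t : ℝ, t₀ ≤ t → 1 ≤ g t)
    (hGbar : IsLUB (g '' Set.Ici t₀) Gbar)
    (hn : Continuous n) (hn0 : ∀ t : ℝ, t₀ ≤ t → 0 ≤ n t)
    (hnbound : ∀ t : ℝ, t₀ ≤ t → n t ≤ α₁ * (α₂ + g t)) :
    ∀ t : ℝ, t₀ ≤ t →
      n t * g t / lam * Real.exp (-(ω * lam / 2) * ∫ τ in t₀..t, 1 / g τ) +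
      (ω / 2) * (∫ τ in t₀..t,
        n τ * Real.exp (-(ω * lam / 2) * ∫ τ' in t₀..τ, 1 / g τ')) ≤
      α₁ / lam * (α₂ + Gbar) * Gbar :=
  s_uniform_bound_general t₀ lam ω α₁ α₂ Gbar g n hlam hω hα₁ hg hg1 hGbar hn hn0 hnbound
end

section
/- Let a' ≥ 0, ε̄ := inf ε ≥ 0 with a' + ε̄/2 > 0, μ > 0, C̄ > 0, θ > 0, A ≥ 0, τ > 0, and define γ₁(σ) := (1 + θ + ε̄/2)/(a' + ε̄) + γ₃₂ σ^{2τ} with γ₃₂ := A²(1/μ + θ/C̄)/(a' + ε̄). Then for any γ ≥ γ₁(σ) and any a, d with 0 ≤ a ≤ A d^τ and 0 ≤ d ≤ σ: ε̄γ + (a + a')(1+γ) − θ − a²(1/μ + θ/C̄) ≥ 1 + a' + ε̄/2 > 1. -/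
/-!
Multiplying the lower bound on `γ` by `a' + ε̄ > 0` gives
`(a' + ε̄) γ ≥ 1 + θ + ε̄/2 + A²(1/μ + θ/C̄) σ^{2τ}`, and `a² ≤ A² d^{2τ} ≤ A² σ^{2τ}`,
so the quadratic loss `a²(1/μ + θ/C̄)` is absorbed; the remaining term `a (1 + γ)` is nonnegative.
-/

theorem sq_le_mul_rpow_two_mul_of_le_mul_rpow {a A d σ τ : ℝ} (ha : 0 ≤ a)
    (had : a ≤ A * d ^ τ) (hd : 0 ≤ d) (hdσ : d ≤ σ) (hτ : 0 ≤ τ) :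
    a ^ 2 ≤ A ^ 2 * σ ^ (2 * τ) :=
  calc a ^ 2 ≤ (A * d ^ τ) ^ 2 := pow_le_pow_left₀ ha had 2
    _ = A ^ 2 * d ^ (2 * τ) := by rw [mul_pow, mul_comm 2 τ, Real.rpow_mul hd, Real.rpow_two]
    _ ≤ A ^ 2 * σ ^ (2 * τ) := by gcongr

theorem coefficient_lower_bound {a' εbar θ K B γ a : ℝ} (hs : 0 < a' + εbar)
    (hc : 0 ≤ 1 + θ + εbar / 2) (hK : 0 ≤ K) (ha : 0 ≤ a) (haB : a ^ 2 ≤ B)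
    (hγ : (1 + θ + εbar / 2 + K * B) / (a' + εbar) ≤ γ) :
    1 + a' + εbar / 2 ≤ εbar * γ + (a + a') * (1 + γ) - θ - a ^ 2 * K := by
  have hsγ : 1 + θ + εbar / 2 + K * B ≤ (a' + εbar) * γ := (div_le_iff₀' hs).1 hγ
  have hγ0 : 0 ≤ γ :=
    (div_nonneg (add_nonneg hc (mul_nonneg hK ((sq_nonneg a).trans haB))) hs.le).trans hγ
  nlinarith [mul_nonneg ha hγ0, mul_nonneg hK (sub_nonneg.2 haB)]

theorem coefficient_positivity_general (a' εbar μ Cbar θ A τ γ32 σ γ a d : ℝ)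
    (hεbar : 0 ≤ εbar) (hpos : 0 < a' + εbar / 2)
    (hμ : 0 < μ) (hC : 0 < Cbar) (hθ : 0 < θ) (hτ : 0 < τ)
    (hγ32 : γ32 = A ^ 2 * (1 / μ + θ / Cbar) / (a' + εbar))
    (hγ : γ ≥ (1 + θ + εbar / 2) / (a' + εbar) + γ32 * σ ^ (2 * τ))
    (ha : 0 ≤ a) (had : a ≤ A * d ^ τ)
    (hd : 0 ≤ d) (hdσ : d ≤ σ) :
    εbar * γ + (a + a') * (1 + γ) - θ - a ^ 2 * (1 / μ + θ / Cbar) ≥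
      1 + a' + εbar / 2 ∧ (1:ℝ) < 1 + a' + εbar / 2 := by
  have hs : 0 < a' + εbar := by linarith
  have ha2 := sq_le_mul_rpow_two_mul_of_le_mul_rpow ha had hd hdσ hτ.le
  have hthreshold : (1 + θ + εbar / 2 + (1 / μ + θ / Cbar) * (A ^ 2 * σ ^ (2 * τ))) /
      (a' + εbar) ≤ γ :=
    calc _ = (1 + θ + εbar / 2) / (a' + εbar) + γ32 * σ ^ (2 * τ) := by rw [hγ32]; ring
      _ ≤ γ := hγ
  exact ⟨coefficient_lower_bound hs (by positivity) (by positivity) ha ha2 hthreshold,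
    by linarith⟩

/-- The key algebraic inequality guaranteeing positivity of the coefficient of u_t². -/
theorem coefficient_positivity (a' εbar μ Cbar θ A τ γ32 σ γ a d : ℝ)
    (ha' : 0 ≤ a') (hεbar : 0 ≤ εbar) (hpos : 0 < a' + εbar / 2)
    (hμ : 0 < μ) (hC : 0 < Cbar) (hθ : 0 < θ) (hA : 0 ≤ A) (hτ : 0 < τ)
    (hγ32 : γ32 = A ^ 2 * (1 / μ + θ / Cbar) / (a' + εbar))
    (hγ : γ ≥ (1 + θ + εbar / 2) / (a' + εbar) + γ32 * σ ^ (2 * τ))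
    (ha : 0 ≤ a) (had : a ≤ A * d ^ τ)
    (hd : 0 ≤ d) (hdσ : d ≤ σ) :
    εbar * γ + (a + a') * (1 + γ) - θ - a ^ 2 * (1 / μ + θ / Cbar) ≥
      1 + a' + εbar / 2 ∧ (1:ℝ) < 1 + a' + εbar / 2 :=
  coefficient_positivity_general a' εbar μ Cbar θ A τ γ32 σ γ a d hεbar hpos hμ hC hθ hτ hγ32 hγ ha
    had hd hdσ
end
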